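/- arXiv:2103.06636 — 5 statements merged into one kernel-verified Lean document; each statement's English description precedes it below -/
import Mathlib

section
/- Along any solution of the primal-dual flow, the quantity ξ(t) := λ(t) - β(t)^{-1}(A x(t) - b) is constant in time: ξ'(t) = 0 for all t ≥ 0, hence ξ(t) = ξ(0). -/
open Real

/-!
Since `β' = -β`, the reciprocal satisfies `(β⁻¹)' = β⁻¹`, so
`(β⁻¹ (A x - b))' = β⁻¹ (A x - b) + β⁻¹ A x' = β⁻¹ (A (x + x') - b)`,
which is exactly `λ'` by the dual equation. Hence `ξ' = 0`, and `ξ` is constant on `[0, ∞)`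
by the mean value inequality.
-/

section

variable {𝕜 : Type*} [NontriviallyNormedField 𝕜]

theorem HasDerivAt.inv_of_deriv_eq_neg {β : 𝕜 → 𝕜} {t : 𝕜}
    (hβ : HasDerivAt β (-β t) t) (hβt : β t ≠ 0) :
    HasDerivAt (fun s => (β s)⁻¹) (β t)⁻¹ t :=
  (hβ.inv hβt).congr_deriv (by field_simp)

end

section

variable {E F : Type*} [NormedAddCommGroup E] [NormedSpace ℝ E]
  [NormedAddCommGroup F] [NormedSpace ℝ F]

theorem apply_eq_apply_zero_of_hasDerivAt_zero {g : ℝ → F}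
    (hg : ∀ t ≥ (0 : ℝ), HasDerivAt g 0 t) {t : ℝ} (ht : 0 ≤ t) : g t = g 0 :=
  constant_of_has_deriv_right_zero
    (fun s hs => (hg s hs.1).continuousAt.continuousWithinAt)
    (fun s hs => (hg s hs.1).hasDerivWithinAt) t ⟨ht, le_rfl⟩

theorem hasDerivAt_sub_inv_smul_residual_eq_zero (A : E →L[ℝ] F) (b : F) {x : ℝ → E} {x' : E}
    {lam : ℝ → F} {lam' : F} {β : ℝ → ℝ} {t : ℝ}
    (hβt : β t ≠ 0) (hβ : HasDerivAt β (-β t) t) (hx : HasDerivAt x x' t)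
    (hlam : HasDerivAt lam lam' t) (hflow : β t • lam' = A (x t + x') - b) :
    HasDerivAt (fun s => lam s - (β s)⁻¹ • (A (x s) - b)) 0 t := by
  have hAx : HasDerivAt (fun s => A (x s) - b) (A x') t :=
    (A.hasFDerivAt.comp_hasDerivAt t hx).sub_const b
  have hlam' : lam' = (β t)⁻¹ • (A (x t + x') - b) := by
    rw [← hflow, smul_smul, inv_mul_cancel₀ hβt, one_smul]
  refine (hlam.sub ((hβ.inv_of_deriv_eq_neg hβt).smul hAx)).congr_deriv ?_
  rw [hlam', map_add]
  simp only [smul_sub, smul_add]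
  abel

end

theorem stmt2_general {n m : ℕ}
    (A : EuclideanSpace ℝ (Fin n) →L[ℝ] EuclideanSpace ℝ (Fin m))
    (b : EuclideanSpace ℝ (Fin m))
    (x x' : ℝ → EuclideanSpace ℝ (Fin n))
    (lam lam' : ℝ → EuclideanSpace ℝ (Fin m))
    (β : ℝ → ℝ)
    (hβpos : ∀ t ≥ (0:ℝ), 0 < β t)
    (hβ : ∀ t ≥ (0:ℝ), HasDerivAt β (-β t) t)
    (hx : ∀ t ≥ (0:ℝ), HasDerivAt x (x' t) t)
    (hlam : ∀ t ≥ (0:ℝ), HasDerivAt lam (lam' t) t)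
    (hflow2 : ∀ t ≥ (0:ℝ), β t • lam' t = A (x t + x' t) - b) :
    ∀ t ≥ (0:ℝ),
      HasDerivAt (fun s => lam s - (β s)⁻¹ • (A (x s) - b)) 0 t ∧
      lam t - (β t)⁻¹ • (A (x t) - b) = lam 0 - (β 0)⁻¹ • (A (x 0) - b) := by
  have hξ : ∀ t ≥ (0:ℝ), HasDerivAt (fun s => lam s - (β s)⁻¹ • (A (x s) - b)) 0 t :=
    fun t ht => hasDerivAt_sub_inv_smul_residual_eq_zero A b (hβpos t ht).ne' (hβ t ht) (hx t ht)
      (hlam t ht) (hflow2 t ht)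
  exact fun t ht => ⟨hξ t ht, apply_eq_apply_zero_of_hasDerivAt_zero hξ ht⟩

/-- Along any solution of the primal-dual flow
γx' = -∇ₓL(x,λ), βλ' = A(x+x') - b with β' = -β, the quantity
ξ(t) = λ(t) - β(t)⁻¹(Ax(t) - b) is constant: ξ'(t) = 0 and ξ(t) = ξ(0). -/
theorem stmt2 {n m : ℕ}
    (A : EuclideanSpace ℝ (Fin n) →L[ℝ] EuclideanSpace ℝ (Fin m))
    (b : EuclideanSpace ℝ (Fin m))
    (f : EuclideanSpace ℝ (Fin n) → ℝ)
    (f' : EuclideanSpace ℝ (Fin n) → EuclideanSpace ℝ (Fin n))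
    (hf : ∀ z, HasGradientAt f (f' z) z)
    (x x' : ℝ → EuclideanSpace ℝ (Fin n))
    (lam lam' : ℝ → EuclideanSpace ℝ (Fin m))
    (γ β : ℝ → ℝ)
    (hβpos : ∀ t ≥ (0:ℝ), 0 < β t)
    (hβ : ∀ t ≥ (0:ℝ), HasDerivAt β (-β t) t)
    (hx : ∀ t ≥ (0:ℝ), HasDerivAt x (x' t) t)
    (hlam : ∀ t ≥ (0:ℝ), HasDerivAt lam (lam' t) t)
    (hflow1 : ∀ t ≥ (0:ℝ), γ t • x' t = -(f' (x t) + A.adjoint (lam t)))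
    (hflow2 : ∀ t ≥ (0:ℝ), β t • lam' t = A (x t + x' t) - b) :
    ∀ t ≥ (0:ℝ),
      HasDerivAt (fun s => lam s - (β s)⁻¹ • (A (x s) - b)) 0 t ∧
      lam t - (β t)⁻¹ • (A (x t) - b) = lam 0 - (β 0)⁻¹ • (A (x 0) - b) :=
  stmt2_general A b x x' lam lam' β hβpos hβ hx hlam hflow2
end

section
/- For any solution of the primal-dual flow with β(t) = β₀ e^{-t}, the feasibility residual satisfies ‖A x(t) - b‖ = β(t) ‖λ(t) - ξ(0)‖, where ξ(0) = λ(0) - β₀^{-1}(A x(0) - b), and hence ‖A x(t) - b‖ ≤ β₀ e^{-t} (‖λ(t) - λ*‖ + ‖ξ(0) - λ*‖) for any λ* ∈ ℝ^m. -/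
open Real

/-- For any solution of the primal-dual flow with β(t) = β₀e^{-t}, the
feasibility residual satisfies ‖Ax(t) - b‖ = β(t)‖λ(t) - ξ(0)‖ where
ξ(0) = λ(0) - β₀⁻¹(Ax(0) - b), hence for any λ*,
‖Ax(t) - b‖ ≤ β₀ e^{-t} (‖λ(t) - λ*‖ + ‖ξ(0) - λ*‖). -/
theorem stmt3 {n m : ℕ}
    (A : EuclideanSpace ℝ (Fin n) →L[ℝ] EuclideanSpace ℝ (Fin m))
    (b : EuclideanSpace ℝ (Fin m))
    (x x' : ℝ → EuclideanSpace ℝ (Fin n))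
    (lam lam' : ℝ → EuclideanSpace ℝ (Fin m))
    (β : ℝ → ℝ) (β₀ : ℝ) (hβ₀ : 0 < β₀)
    (hβ : ∀ t ≥ (0:ℝ), β t = β₀ * exp (-t))
    (hx : ∀ t ≥ (0:ℝ), HasDerivAt x (x' t) t)
    (hlam : ∀ t ≥ (0:ℝ), HasDerivAt lam (lam' t) t)
    (hflow2 : ∀ t ≥ (0:ℝ), β t • lam' t = A (x t + x' t) - b) :
    ∀ t ≥ (0:ℝ),
      ‖A (x t) - b‖ = β t * ‖lam t - (lam 0 - β₀⁻¹ • (A (x 0) - b))‖ ∧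
      ∀ lamstar : EuclideanSpace ℝ (Fin m),
        ‖A (x t) - b‖ ≤ β₀ * exp (-t) *
          (‖lam t - lamstar‖ + ‖(lam 0 - β₀⁻¹ • (A (x 0) - b)) - lamstar‖) := by
  set f : ℝ → EuclideanSpace ℝ (Fin m) :=
    fun t => exp t • (A (x t) - b) - β₀ • lam t with hf
  have hderiv : ∀ t ≥ (0:ℝ), HasDerivAt f 0 t := by
    intro t ht
    have hAx : HasDerivAt (fun s => A (x s) - b) (A (x' t)) t := by
      simpa using (A.hasFDerivAt.comp_hasDerivAt t (hx t ht)).sub_const b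
    have h1 : HasDerivAt (fun s => exp s • (A (x s) - b))
        (exp t • A (x' t) + exp t • (A (x t) - b)) t := by
      exact (Real.hasDerivAt_exp t).smul hAx
    have h2 : HasDerivAt (fun s => β₀ • lam s) (β₀ • lam' t) t :=
      (hlam t ht).const_smul β₀
    have key : exp t • A (x' t) + exp t • (A (x t) - b) - β₀ • lam' t = 0 := by
      have h3 := hflow2 t ht
      rw [hβ t ht, map_add] at h3
      have h4 : β₀ • lam' t = exp t • ((β₀ * exp (-t)) • lam' t) := by
        rw [smul_smul, show exp t * (β₀ * exp (-t)) = β₀ by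
          rw [mul_comm β₀, ← mul_assoc, ← Real.exp_add]; simp]
      rw [h4, h3]
      module
    have h5 := h1.sub h2
    rw [key] at h5
    exact h5
  intro t ht
  have hconst : f t = f 0 := by
    have := constant_of_has_deriv_right_zero (f := f) (a := 0) (b := t)
      (fun s hs => ((hderiv s hs.1).continuousAt).continuousWithinAt)
      (fun s hs => ((hderiv s hs.1).hasDerivWithinAt))
    exact this t ⟨ht, le_refl t⟩
  have hβ0ne : β₀ ≠ 0 := ne_of_gt hβ₀
  have hkey : A (x t) - b = (β₀ * exp (-t)) • (lam t - (lam 0 - β₀⁻¹ • (A (x 0) - b))) := by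
    have h0 : exp t • (A (x t) - b) - β₀ • lam t = (A (x 0) - b) - β₀ • lam 0 := by
      simpa [hf] using hconst
    have h1 : A (x t) - b = exp (-t) • (β₀ • lam t + (A (x 0) - b) - β₀ • lam 0) := by
      have h2 : exp t • (A (x t) - b) = β₀ • lam t + (A (x 0) - b) - β₀ • lam 0 := by
        rw [sub_eq_iff_eq_add] at h0; rw [h0]; abel
      have := congrArg (fun v => exp (-t) • v) h2
      simpa [smul_smul, ← Real.exp_add] using this
    rw [h1]
    match_scalars <;> field_simp <;> ring
  have hpos : 0 < β₀ * exp (-t) := mul_pos hβ₀ (exp_pos _)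
  have heq : ‖A (x t) - b‖ = β t * ‖lam t - (lam 0 - β₀⁻¹ • (A (x 0) - b))‖ := by
    rw [hkey, norm_smul, hβ t ht, Real.norm_eq_abs, abs_of_pos hpos]
  refine ⟨heq, fun lamstar => ?_⟩
  rw [heq, hβ t ht]
  have htri : ‖lam t - (lam 0 - β₀⁻¹ • (A (x 0) - b))‖ ≤
      ‖lam t - lamstar‖ + ‖(lam 0 - β₀⁻¹ • (A (x 0) - b)) - lamstar‖ := by
    have := norm_sub_le (lam t - lamstar) ((lam 0 - β₀⁻¹ • (A (x 0) - b)) - lamstar)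
    simpa [sub_sub_sub_cancel_right] using this
  exact mul_le_mul_of_nonneg_left htri hpos.le
end

section
/- For every real t with e^{2t} ≥ 2, the 3×3 matrix B̂(t) = [[-2e^t, 1, -1],[-1,0,0],[1,0,0]] has eigenvalues 0, b₂ = -2/(e^t + √(e^{2t} - 2)) and b₃ = -e^t - √(e^{2t} - 2); in particular b₂ < 0 and b₃ < 0. -/
open Real

/-- For every t with e^{2t} ≥ 2, the matrix
B̂(t) = [[-2eᵗ, 1, -1],[-1,0,0],[1,0,0]] has eigenvalues 0,
b₂ = -2/(eᵗ + √(e^{2t}-2)) and b₃ = -eᵗ - √(e^{2t}-2);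
in particular b₂ < 0 and b₃ < 0. -/
theorem stmt7 (t : ℝ) (ht : 2 ≤ exp (2 * t)) :
    spectrum ℝ
        (!![-2 * exp t, 1, -1; -1, 0, 0; 1, 0, 0] : Matrix (Fin 3) (Fin 3) ℝ) =
      {0, -2 / (exp t + sqrt (exp (2 * t) - 2)), -exp t - sqrt (exp (2 * t) - 2)} ∧
    -2 / (exp t + sqrt (exp (2 * t) - 2)) < 0 ∧
    -exp t - sqrt (exp (2 * t) - 2) < 0 := by
  have hE : 0 < exp t := exp_pos t
  set s : ℝ := sqrt (exp (2 * t) - 2) with hs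
  have hs0 : 0 ≤ s := sqrt_nonneg _
  have hs2 : s ^ 2 = exp (2 * t) - 2 := sq_sqrt (by linarith)
  have hEsq : exp t ^ 2 = exp (2 * t) := by
    rw [← exp_nat_mul]; norm_num
  have hEs : 0 < exp t + s := by positivity
  have hb2 : -2 / (exp t + s) = s - exp t := by
    rw [div_eq_iff (ne_of_gt hEs)]
    nlinarith [hs2, hEsq]
  refine ⟨?_, ?_, by linarith⟩
  · ext x
    rw [spectrum.mem_iff, Matrix.isUnit_iff_isUnit_det, isUnit_iff_ne_zero, not_not]
    have hdet : ((algebraMap ℝ (Matrix (Fin 3) (Fin 3) ℝ)) x -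
        !![-2 * exp t, 1, -1; -1, 0, 0; 1, 0, 0]).det
        = x * (x - (s - exp t)) * (x - (-exp t - s)) := by
      simp [Matrix.det_fin_three, Matrix.algebraMap_eq_diagonal, Matrix.diagonal_apply,
        Matrix.sub_apply, Matrix.vecHead, Matrix.vecTail]
      linear_combination x * hs2 - x * hEsq
    rw [hdet, hb2]
    simp only [Set.mem_insert_iff, Set.mem_singleton_iff, mul_eq_zero, sub_eq_zero]
    tauto
  · rw [hb2]
    nlinarith [hs2, hEsq]
end

section
/- If (x*, λ*) is a saddle point of L and x_k ∈ ℝⁿ, λ_k ∈ ℝ^m satisfy 0 ≤ L(x_k,λ*) - L(x*,λ_k) ≤ ε and ‖A x_k - b‖ ≤ δ, then |f(x_k) - f(x*)| ≤ ε + δ‖λ*‖. -/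
open RealInnerProductSpace

/-- If (x*,λ*) is a saddle point of L (so Ax* = b) and
0 ≤ L(x_k,λ*) - L(x*,λ_k) ≤ ε, ‖Ax_k - b‖ ≤ δ, then
|f(x_k) - f(x*)| ≤ ε + δ‖λ*‖. -/
theorem stmt15 {n m : ℕ}
    (f : EuclideanSpace ℝ (Fin n) → ℝ)
    (A : EuclideanSpace ℝ (Fin n) →L[ℝ] EuclideanSpace ℝ (Fin m))
    (b : EuclideanSpace ℝ (Fin m))
    (xs : EuclideanSpace ℝ (Fin n)) (ls : EuclideanSpace ℝ (Fin m))
    (hsaddle : ∀ (x : EuclideanSpace ℝ (Fin n)) (lam : EuclideanSpace ℝ (Fin m)),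
      f xs + ⟪lam, A xs - b⟫ ≤ f xs + ⟪ls, A xs - b⟫ ∧
      f xs + ⟪ls, A xs - b⟫ ≤ f x + ⟪ls, A x - b⟫)
    (hxs : A xs = b)
    (xk : EuclideanSpace ℝ (Fin n)) (lamk : EuclideanSpace ℝ (Fin m))
    (ε δ : ℝ) (hε : 0 ≤ ε) (hδ : 0 ≤ δ)
    (hgap0 : 0 ≤ (f xk + ⟪ls, A xk - b⟫) - (f xs + ⟪lamk, A xs - b⟫))
    (hgap : (f xk + ⟪ls, A xk - b⟫) - (f xs + ⟪lamk, A xs - b⟫) ≤ ε)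
    (hfeas : ‖A xk - b‖ ≤ δ) :
    |f xk - f xs| ≤ ε + δ * ‖ls‖ := by
  have hz : ⟪lamk, A xs - b⟫ = (0:ℝ) := by simp [hxs]
  have hz2 : ⟪ls, A xs - b⟫ = (0:ℝ) := by simp [hxs]
  have hsad := (hsaddle xk lamk).2
  have hib : |⟪ls, A xk - b⟫| ≤ δ * ‖ls‖ := by
    calc |⟪ls, A xk - b⟫| ≤ ‖ls‖ * ‖A xk - b‖ := abs_real_inner_le_norm _ _
    _ ≤ δ * ‖ls‖ := by nlinarith [norm_nonneg ls]
  obtain ⟨h1, h2⟩ := abs_le.mp hib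
  rw [abs_le]
  constructor <;> nlinarith
end

section
/- Let h : ℝⁿ → ℝ be L-smooth and μ-convex (μ ≥ 0), g proper closed convex, λ ∈ ℝ^m, and suppose (γ/α)(x_k - x_{k+1}) - ∇h(x_k) - Aᵀλ ∈ ∂g(x_{k+1}) for some γ, α > 0. Then for all y ∈ ℝⁿ: L(x_{k+1},λ) - L(y,λ) + (γ/α)⟨x_{k+1} - x_k, x_k - y⟩ ≤ -(μ/2)‖y - x_k‖² + ((Lα - 2γ)/(2α))‖x_{k+1} - x_k‖², where L(x,λ) = h(x) + g(x) + ⟨λ, Ax - b⟩. -/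
/-!
Add three inequalities: the descent lemma for `h` between `x_k` and `x_{k+1}`, strong convexity
of `h` between `x_k` and `y`, and the subgradient inequality for `g` at `x_{k+1}` tested at `y`.
The adjoint turns `⟪Aᵀλ, y - x_{k+1}⟫` into the difference of the linear parts of the Lagrangian,
and `⟪x_k - x_{k+1}, y - x_{k+1}⟫ = ⟪x_{k+1} - x_k, x_k - y⟫ + ‖x_{k+1} - x_k‖²` produces the
remaining terms.
-/

open RealInnerProductSpace

section
variable {E : Type*} [NormedAddCommGroup E] [InnerProductSpace ℝ E] [CompleteSpace E]

theorem HasGradientAt.hasDerivAt_add_smul {h : E → ℝ} {h' z v : E} {t : ℝ}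
    (hh : HasGradientAt h h' (z + t • v)) :
    HasDerivAt (fun s : ℝ => h (z + s • v)) ⟪h', v⟫ t := by
  have hline : HasDerivAt (fun s : ℝ => z + s • v) v t := by
    simpa using ((hasDerivAt_id t).smul_const v).const_add z
  have := hh.hasFDerivAt.comp_hasDerivAt t hline
  rwa [InnerProductSpace.toDual_apply_apply] at this

theorem le_add_inner_add_sq_norm_of_lipschitz_gradient {L : ℝ} {h : E → ℝ} {h' : E → E}
    (hgrad : ∀ z, HasGradientAt h (h' z) z)
    (hLip : ∀ z w, ‖h' z - h' w‖ ≤ L * ‖z - w‖)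
    (z w : E) : h w ≤ h z + ⟪h' z, w - z⟫ + L / 2 * ‖w - z‖ ^ 2 := by
  set v := w - z
  -- `φ 1 ≤ φ 0` is the claim; `φ` is antitone on `[0, ∞)` because `h'` is `L`-Lipschitz.
  let φ : ℝ → ℝ := fun t => h (z + t • v) - (t * ⟪h' z, v⟫ + L / 2 * t ^ 2 * ‖v‖ ^ 2)
  have hφ : ∀ t, HasDerivAt φ (⟪h' (z + t • v) - h' z, v⟫ - L * t * ‖v‖ ^ 2) t := by
    intro t
    have hq : HasDerivAt (fun s : ℝ => s * ⟪h' z, v⟫ + L / 2 * s ^ 2 * ‖v‖ ^ 2)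
        (⟪h' z, v⟫ + L * t * ‖v‖ ^ 2) t := by
      refine (((hasDerivAt_id t).mul_const _).add
        (((hasDerivAt_pow 2 t).const_mul (L / 2)).mul_const (‖v‖ ^ 2))).congr_deriv ?_
      simp only [one_mul]; ring
    refine ((hgrad _).hasDerivAt_add_smul.sub hq).congr_deriv ?_
    rw [inner_sub_left]; ring
  have hφ' : ∀ t ∈ interior (Set.Ici (0 : ℝ)),
      ⟪h' (z + t • v) - h' z, v⟫ - L * t * ‖v‖ ^ 2 ≤ 0 := by
    intro t ht
    rw [interior_Ici, Set.mem_Ioi] at ht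
    have hLipt := hLip (z + t • v) z
    rw [add_sub_cancel_left, norm_smul, Real.norm_of_nonneg ht.le] at hLipt
    rw [sub_nonpos]
    calc ⟪h' (z + t • v) - h' z, v⟫ ≤ ‖h' (z + t • v) - h' z‖ * ‖v‖ := real_inner_le_norm _ _
      _ ≤ L * (t * ‖v‖) * ‖v‖ := by gcongr
      _ = L * t * ‖v‖ ^ 2 := by ring
  have hanti : AntitoneOn φ (Set.Ici 0) :=
    antitoneOn_of_hasDerivWithinAt_nonpos (convex_Ici 0)
      (fun t _ => (hφ t).continuousAt.continuousWithinAt)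
      (fun t _ => (hφ t).hasDerivWithinAt) hφ'
  have hφ01 := hanti Set.self_mem_Ici (Set.mem_Ici.mpr zero_le_one) zero_le_one
  simp only [φ, v, one_smul, add_sub_cancel, one_mul, one_pow, mul_one, zero_smul, add_zero,
    zero_mul, ne_eq, OfNat.ofNat_ne_zero, not_false_eq_true, zero_pow, mul_zero, sub_zero,
    tsub_le_iff_right] at hφ01
  linarith
end

theorem stmt19_general {n m : ℕ} (L μ : ℝ)
    (h : EuclideanSpace ℝ (Fin n) → ℝ)
    (h' : EuclideanSpace ℝ (Fin n) → EuclideanSpace ℝ (Fin n))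
    (hgrad : ∀ z, HasGradientAt h (h' z) z)
    (hLip : ∀ z w, ‖h' z - h' w‖ ≤ L * ‖z - w‖)
    (hconv : ∀ z w, h z + ⟪h' z, w - z⟫ + μ / 2 * ‖w - z‖ ^ 2 ≤ h w)
    (g : EuclideanSpace ℝ (Fin n) → ℝ)
    (A : EuclideanSpace ℝ (Fin n) →L[ℝ] EuclideanSpace ℝ (Fin m))
    (b : EuclideanSpace ℝ (Fin m)) (lam : EuclideanSpace ℝ (Fin m))
    (γ α : ℝ) (hα : 0 < α)
    (xk xk1 : EuclideanSpace ℝ (Fin n))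
    (hsub : ∀ z, g xk1 +
      ⟪(γ / α) • (xk - xk1) - h' xk - A.adjoint lam, z - xk1⟫ ≤ g z) :
    ∀ y : EuclideanSpace ℝ (Fin n),
      (h xk1 + g xk1 + ⟪lam, A xk1 - b⟫) - (h y + g y + ⟪lam, A y - b⟫) +
        γ / α * ⟪xk1 - xk, xk - y⟫
      ≤ -(μ / 2) * ‖y - xk‖ ^ 2 + (L * α - 2 * γ) / (2 * α) * ‖xk1 - xk‖ ^ 2 := by
  intro y
  have hdescent := le_add_inner_add_sq_norm_of_lipschitz_gradient hgrad hLip xk xk1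
  have hstrong := hconv xk y
  have hsubgrad := hsub y
  have hadjoint : ⟪A.adjoint lam, y - xk1⟫ = ⟪lam, A y - b⟫ - ⟪lam, A xk1 - b⟫ := by
    rw [ContinuousLinearMap.adjoint_inner_left, map_sub, inner_sub_right, inner_sub_right,
      inner_sub_right]
    ring
  have hthree_point : ⟪xk - xk1, y - xk1⟫ = ⟪xk1 - xk, xk - y⟫ + ‖xk1 - xk‖ ^ 2 := by
    rw [← neg_sub xk1 xk, ← sub_add_sub_cancel y xk xk1, inner_add_right, ← neg_sub xk y,
      inner_neg_neg, ← neg_sub xk1 xk, inner_neg_neg, real_inner_self_eq_norm_sq]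
  have hsplit : ⟪h' xk, y - xk1⟫ = ⟪h' xk, y - xk⟫ - ⟪h' xk, xk1 - xk⟫ := by
    rw [← inner_sub_right, sub_sub_sub_cancel_right]
  have hcoef : (L * α - 2 * γ) / (2 * α) = L / 2 - γ / α := by
    field_simp
  rw [inner_sub_left, inner_sub_left, real_inner_smul_left, hadjoint, hthree_point,
    hsplit] at hsubgrad
  rw [hcoef]
  linarith

/-- If h is L-smooth and μ-convex, g is convex, and
(γ/α)(x_k - x_{k+1}) - ∇h(x_k) - Aᵀλ ∈ ∂g(x_{k+1}), then for all y:
L(x_{k+1},λ) - L(y,λ) + (γ/α)⟨x_{k+1}-x_k, x_k-y⟩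
  ≤ -(μ/2)‖y-x_k‖² + ((Lα-2γ)/(2α))‖x_{k+1}-x_k‖²,
where L(x,λ) = h(x) + g(x) + ⟨λ, Ax-b⟩. -/
theorem stmt19 {n m : ℕ} (L μ : ℝ) (hL : 0 ≤ L) (hμ : 0 ≤ μ)
    (h : EuclideanSpace ℝ (Fin n) → ℝ)
    (h' : EuclideanSpace ℝ (Fin n) → EuclideanSpace ℝ (Fin n))
    (hgrad : ∀ z, HasGradientAt h (h' z) z)
    (hLip : ∀ z w, ‖h' z - h' w‖ ≤ L * ‖z - w‖)
    (hconv : ∀ z w, h z + ⟪h' z, w - z⟫ + μ / 2 * ‖w - z‖ ^ 2 ≤ h w)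
    (g : EuclideanSpace ℝ (Fin n) → ℝ) (hg : ConvexOn ℝ Set.univ g)
    (A : EuclideanSpace ℝ (Fin n) →L[ℝ] EuclideanSpace ℝ (Fin m))
    (b : EuclideanSpace ℝ (Fin m)) (lam : EuclideanSpace ℝ (Fin m))
    (γ α : ℝ) (hγ : 0 < γ) (hα : 0 < α)
    (xk xk1 : EuclideanSpace ℝ (Fin n))
    (hsub : ∀ z, g xk1 +
      ⟪(γ / α) • (xk - xk1) - h' xk - A.adjoint lam, z - xk1⟫ ≤ g z) :
    ∀ y : EuclideanSpace ℝ (Fin n),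
      (h xk1 + g xk1 + ⟪lam, A xk1 - b⟫) - (h y + g y + ⟪lam, A y - b⟫) +
        γ / α * ⟪xk1 - xk, xk - y⟫
      ≤ -(μ / 2) * ‖y - xk‖ ^ 2 + (L * α - 2 * γ) / (2 * α) * ‖xk1 - xk‖ ^ 2 :=
  stmt19_general L μ h h' hgrad hLip hconv g A b lam γ α hα xk xk1 hsub
end
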